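/- The dual function J_f above attains its minimum on C; moreover the minimum is attained in a compact subset of the form {0 ≤ λ̃_{hj} ≤ λ_max, 0 ≤ γ̃_{kl} ≤ γ_max, λ̃_{hj}+γ̃_{kl} ≥ ε} for suitable λ_max, γ_max, ε > 0. -/
import Mathlib


lemma log_le_affine {t s : ℝ} (ht : 0 < t) (hs : 0 < s) :
    Real.log s ≤ t * s - 1 - Real.log t := by
  have h1 : Real.log (t * s) ≤ t * s - 1 := Real.log_le_sub_one_of_pos (mul_pos ht hs)
  rw [Real.log_mul ht.ne' hs.ne'] at h1
  linarith

lemma sum_log_le {A B : Type*} [Fintype A] [Fintype B]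
    {t : ℝ} (ht : 0 < t) (lam : A → ℝ) (gam : B → ℝ)
    (hpos : ∀ a b, 0 < lam a + gam b) (a₀ : A) (b₀ : B) :
    ∑ a : A, ∑ b : B, Real.log (lam a + gam b) ≤
      Real.log (lam a₀ + gam b₀) + t * ∑ a : A, ∑ b : B, (lam a + gam b)
        - ((Fintype.card A : ℝ) * (Fintype.card B : ℝ) - 1) * (1 + Real.log t) := by
  classical
  set h : A × B → ℝ := fun p => lam p.1 + gam p.2 with hh
  have hA : ∀ f : ℝ → ℝ, ∑ a : A, ∑ b : B, f (lam a + gam b) = ∑ p : A × B, f (h p) := by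
    intro f
    rw [← Finset.univ_product_univ, Finset.sum_product]
  set p₀ : A × B := (a₀, b₀) with hp₀
  have hmem : p₀ ∈ (Finset.univ : Finset (A × B)) := Finset.mem_univ _
  have hsplit : ∑ p : A × B, Real.log (h p) =
      Real.log (h p₀) + ∑ p ∈ Finset.univ.erase p₀, Real.log (h p) :=
    (Finset.add_sum_erase _ _ hmem).symm
  have h1 : ∑ p ∈ Finset.univ.erase p₀, Real.log (h p) ≤
      ∑ p ∈ Finset.univ.erase p₀, (t * h p - (1 + Real.log t)) :=
    Finset.sum_le_sum fun p _ => by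
      have := log_le_affine ht (hpos p.1 p.2); simp only [hh]; linarith
  have h2 : ∑ p ∈ Finset.univ.erase p₀, (t * h p - (1 + Real.log t)) =
      t * ∑ p ∈ Finset.univ.erase p₀, h p
        - ((Finset.univ.erase p₀).card : ℝ) * (1 + Real.log t) := by
    rw [Finset.sum_sub_distrib, ← Finset.mul_sum, Finset.sum_const, nsmul_eq_mul]
  have hcard : ((Finset.univ.erase p₀).card : ℝ) =
      (Fintype.card A : ℝ) * (Fintype.card B : ℝ) - 1 := by
    rw [Finset.card_erase_of_mem hmem, Finset.card_univ, Fintype.card_prod]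
    have h1 : 1 ≤ Fintype.card A * Fintype.card B :=
      Nat.mul_pos (Fintype.card_pos_iff.mpr ⟨a₀⟩) (Fintype.card_pos_iff.mpr ⟨b₀⟩)
    push_cast [Nat.cast_sub h1]
    ring
  have h3 : ∑ p ∈ Finset.univ.erase p₀, h p ≤ ∑ p : A × B, h p :=
    Finset.sum_le_sum_of_subset_of_nonneg (Finset.erase_subset _ _)
      (fun p _ _ => (hpos p.1 p.2).le)
  have h4 : t * ∑ p ∈ Finset.univ.erase p₀, h p ≤ t * ∑ p : A × B, h p :=
    mul_le_mul_of_nonneg_left h3 ht.le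
  have e1 := hA Real.log
  have e2 := hA id
  simp only [id] at e2
  rw [hcard] at h2
  rw [e1, e2, hsplit]
  have hp : h p₀ = lam a₀ + gam b₀ := rfl
  rw [hp]
  linarith

/-- The dual function J_f. Index `a` ranges over pairs (h,j) ∈ I₁×I₁ and `b`
over pairs (k,l) ∈ I₂×I₂. -/
noncomputable def Jf {A B : Type*} [Fintype A] [Fintype B]
    (c : ℝ) (c' : A → ℝ) (c'' : B → ℝ) (lam : A → ℝ) (gam : B → ℝ) : ℝ :=
  -(c / 2) * ∑ a : A, ∑ b : B, Real.log (lam a + gam b) +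
    (1 / 2) * ∑ a : A, lam a * c' a + (1 / 2) * ∑ b : B, gam b * c'' b

set_option maxHeartbeats 1000000 in
theorem Jf_attains_min {A B : Type*} [Fintype A] [Fintype B] [Nonempty A] [Nonempty B]
    (c : ℝ) (hc : 0 < c) (c' : A → ℝ) (hc' : ∀ a, 0 < c' a)
    (c'' : B → ℝ) (hc'' : ∀ b, 0 < c'' b) :
    ∃ (lamMax gamMax ε : ℝ) (lam₀ : A → ℝ) (gam₀ : B → ℝ),
      0 < lamMax ∧ 0 < gamMax ∧ 0 < ε ∧
      (∀ a, 0 ≤ lam₀ a ∧ lam₀ a ≤ lamMax) ∧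
      (∀ b, 0 ≤ gam₀ b ∧ gam₀ b ≤ gamMax) ∧
      (∀ a b, ε ≤ lam₀ a + gam₀ b) ∧
      ∀ (lam : A → ℝ) (gam : B → ℝ),
        (∀ a, 0 ≤ lam a) → (∀ b, 0 ≤ gam b) → (∀ a b, 0 < lam a + gam b) →
        Jf c c' c'' lam₀ gam₀ ≤ Jf c c' c'' lam gam := by
  classical
  have hAne : (Finset.univ : Finset A).Nonempty := Finset.univ_nonempty
  have hBne : (Finset.univ : Finset B).Nonempty := Finset.univ_nonempty
  set m1 : ℝ := Finset.univ.inf' hAne c' with hm1def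
  set m2 : ℝ := Finset.univ.inf' hBne c'' with hm2def
  have hm1 : 0 < m1 := by
    rw [hm1def, Finset.lt_inf'_iff]; exact fun a _ => hc' a
  have hm2 : 0 < m2 := by
    rw [hm2def, Finset.lt_inf'_iff]; exact fun b _ => hc'' b
  have hm1le : ∀ a, m1 ≤ c' a := fun a => Finset.inf'_le _ (Finset.mem_univ a)
  have hm2le : ∀ b, m2 ≤ c'' b := fun b => Finset.inf'_le _ (Finset.mem_univ b)
  set NA : ℝ := (Fintype.card A : ℝ) with hNAdef
  set NB : ℝ := (Fintype.card B : ℝ) with hNBdef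
  have hNA : 1 ≤ NA := by
    rw [hNAdef]; exact_mod_cast Fintype.card_pos
  have hNB : 1 ≤ NB := by
    rw [hNBdef]; exact_mod_cast Fintype.card_pos
  set t : ℝ := min (m1 / (4 * c * NB)) (m2 / (4 * c * NA)) with htdef
  have ht : 0 < t := lt_min (by positivity) (by positivity)
  have hct1 : c * t * NB ≤ m1 / 4 := by
    have h := min_le_left (m1 / (4 * c * NB)) (m2 / (4 * c * NA))
    rw [← htdef, le_div_iff₀ (by positivity)] at h
    nlinarith
  have hct2 : c * t * NA ≤ m2 / 4 := by
    have h := min_le_right (m1 / (4 * c * NB)) (m2 / (4 * c * NA))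
    rw [← htdef, le_div_iff₀ (by positivity)] at h
    nlinarith
  have hct1' : c * t ≤ m1 / 4 := by nlinarith [mul_pos hc ht]
  have hct2' : c * t ≤ m2 / 4 := by nlinarith [mul_pos hc ht]
  -- key estimate
  have key : ∀ (lam : A → ℝ) (gam : B → ℝ), (∀ a, 0 ≤ lam a) → (∀ b, 0 ≤ gam b) →
      (∀ a b, 0 < lam a + gam b) → ∀ a₀ b₀,
      -(c / 2) * Real.log (lam a₀ + gam b₀)
        + (3 / 8) * (∑ a : A, lam a * c' a + ∑ b : B, gam b * c'' b)
        + (c / 2) * ((NA * NB - 1) * (1 + Real.log t))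
        ≤ Jf c c' c'' lam gam := by
    intro lam gam hl hg hpos a₀ b₀
    have hs := sum_log_le ht lam gam hpos a₀ b₀
    have hdd : ∑ a : A, ∑ b : B, (lam a + gam b) = NB * ∑ a : A, lam a + NA * ∑ b : B, gam b := by
      simp only [Finset.sum_add_distrib, Finset.sum_const, Finset.card_univ, nsmul_eq_mul,
        hNAdef, hNBdef, ← Finset.mul_sum]
    have hL : 0 ≤ ∑ a : A, lam a := Finset.sum_nonneg fun a _ => hl a
    have hG : 0 ≤ ∑ b : B, gam b := Finset.sum_nonneg fun b _ => hg b
    have habs1 : m1 * ∑ a : A, lam a ≤ ∑ a : A, lam a * c' a := by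
      rw [Finset.mul_sum]
      exact Finset.sum_le_sum fun a _ => by nlinarith [hm1le a, hl a]
    have habs2 : m2 * ∑ b : B, gam b ≤ ∑ b : B, gam b * c'' b := by
      rw [Finset.mul_sum]
      exact Finset.sum_le_sum fun b _ => by nlinarith [hm2le b, hg b]
    have e3 : -(c / 2) * (∑ a : A, ∑ b : B, Real.log (lam a + gam b)) ≥
        -(c / 2) * (Real.log (lam a₀ + gam b₀) + t * (NB * ∑ a : A, lam a + NA * ∑ b : B, gam b)
          - (NA * NB - 1) * (1 + Real.log t)) := by
      rw [hdd] at hs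
      have := mul_le_mul_of_nonneg_left hs (by positivity : (0:ℝ) ≤ c / 2)
      linarith
    have e4 : c * t * NB * ∑ a : A, lam a ≤ (m1 / 4) * ∑ a : A, lam a :=
      mul_le_mul_of_nonneg_right hct1 hL
    have e5 : c * t * NA * ∑ b : B, gam b ≤ (m2 / 4) * ∑ b : B, gam b :=
      mul_le_mul_of_nonneg_right hct2 hG
    simp only [Jf]
    nlinarith [habs1, habs2, e3, e4, e5]
  -- coercivity
  set K' : ℝ := (c / 2) * ((NA * NB - 1) * (1 + Real.log t)) with hK'def
  set K₁ : ℝ := K' + (c / 2) * (1 + Real.log t) with hK₁def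
  have key1 : ∀ (lam : A → ℝ) (gam : B → ℝ), (∀ a, 0 ≤ lam a) → (∀ b, 0 ≤ gam b) →
      (∀ a b, 0 < lam a + gam b) →
      (1 / 4) * (∑ a : A, lam a * c' a + ∑ b : B, gam b * c'' b) + K₁
        ≤ Jf c c' c'' lam gam := by
    intro lam gam hl hg hpos
    obtain ⟨a₀⟩ := ‹Nonempty A›
    obtain ⟨b₀⟩ := ‹Nonempty B›
    have hk := key lam gam hl hg hpos a₀ b₀
    have hla := log_le_affine ht (hpos a₀ b₀)
    have h1 : lam a₀ * c' a₀ ≤ ∑ a : A, lam a * c' a :=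
      Finset.single_le_sum (fun a _ => mul_nonneg (hl a) (hc' a).le) (Finset.mem_univ a₀)
    have h2 : gam b₀ * c'' b₀ ≤ ∑ b : B, gam b * c'' b :=
      Finset.single_le_sum (fun b _ => mul_nonneg (hg b) (hc'' b).le) (Finset.mem_univ b₀)
    have h3 : c * t * lam a₀ ≤ (m1 / 4) * lam a₀ := mul_le_mul_of_nonneg_right hct1' (hl a₀)
    have h4 : c * t * gam b₀ ≤ (m2 / 4) * gam b₀ := mul_le_mul_of_nonneg_right hct2' (hg b₀)
    have h5 : (m1 / 4) * lam a₀ ≤ (1 / 4) * (lam a₀ * c' a₀) := by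
      nlinarith [hm1le a₀, hl a₀]
    have h6 : (m2 / 4) * gam b₀ ≤ (1 / 4) * (gam b₀ * c'' b₀) := by
      nlinarith [hm2le b₀, hg b₀]
    have h7 := mul_le_mul_of_nonneg_left hla (by positivity : (0:ℝ) ≤ c / 2)
    linarith [h1, h2, h3, h4, h5, h6, h7, hk]
  set M : ℝ := Jf c c' c'' (fun _ => (1:ℝ)) (fun _ => (1:ℝ)) with hMdef
  clear_value m1 m2 NA NB t K' K₁ M
  set lamMax : ℝ := max 1 (4 * (M - K₁) / m1) with hlamMaxdef
  set gamMax : ℝ := max 1 (4 * (M - K₁) / m2) with hgamMaxdef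
  set ε : ℝ := min 1 (Real.exp (2 * (K' - M) / c)) with hεdef
  have hlamMaxpos : 0 < lamMax := lt_of_lt_of_le one_pos (le_max_left _ _)
  have hgamMaxpos : 0 < gamMax := lt_of_lt_of_le one_pos (le_max_left _ _)
  have hεpos : 0 < ε := lt_min one_pos (Real.exp_pos _)
  have hε1 : ε ≤ 1 := min_le_left _ _
  have hbound : ∀ (lam : A → ℝ) (gam : B → ℝ), (∀ a, 0 ≤ lam a) → (∀ b, 0 ≤ gam b) →
      (∀ a b, 0 < lam a + gam b) → Jf c c' c'' lam gam ≤ M →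
      (∀ a, lam a ≤ lamMax) ∧ (∀ b, gam b ≤ gamMax) ∧ (∀ a b, ε ≤ lam a + gam b) := by
    intro lam gam hl hg hpos hJ
    have hS1 : 0 ≤ ∑ a : A, lam a * c' a :=
      Finset.sum_nonneg fun a _ => mul_nonneg (hl a) (hc' a).le
    have hS2 : 0 ≤ ∑ b : B, gam b * c'' b :=
      Finset.sum_nonneg fun b _ => mul_nonneg (hg b) (hc'' b).le
    have hk1 := key1 lam gam hl hg hpos
    refine ⟨fun a => ?_, fun b => ?_, fun a b => ?_⟩
    · have h1 : lam a * c' a ≤ ∑ a : A, lam a * c' a :=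
        Finset.single_le_sum (fun a _ => mul_nonneg (hl a) (hc' a).le) (Finset.mem_univ a)
      have h2 : m1 * lam a ≤ lam a * c' a := by nlinarith [hm1le a, hl a]
      have h3 : lam a ≤ 4 * (M - K₁) / m1 := by
        rw [le_div_iff₀ hm1]; linarith [h1, h2, hS2, hk1, hJ]
      exact h3.trans (le_max_right _ _)
    · have h1 : gam b * c'' b ≤ ∑ b : B, gam b * c'' b :=
        Finset.single_le_sum (fun b _ => mul_nonneg (hg b) (hc'' b).le) (Finset.mem_univ b)
      have h2 : m2 * gam b ≤ gam b * c'' b := by nlinarith [hm2le b, hg b]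
      have h3 : gam b ≤ 4 * (M - K₁) / m2 := by
        rw [le_div_iff₀ hm2]; linarith [h1, h2, hS1, hk1, hJ]
      exact h3.trans (le_max_right _ _)
    · have hk := key lam gam hl hg hpos a b
      have hlog : 2 * (K' - M) / c ≤ Real.log (lam a + gam b) := by
        rw [div_le_iff₀ hc]; linarith
      calc ε ≤ Real.exp (2 * (K' - M) / c) := min_le_right _ _
        _ ≤ Real.exp (Real.log (lam a + gam b)) := Real.exp_le_exp.mpr hlog
        _ = lam a + gam b := Real.exp_log (hpos a b)
  -- topology
  set f : (A → ℝ) × (B → ℝ) → ℝ := fun p => Jf c c' c'' p.1 p.2 with hfdef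
  set Box : Set ((A → ℝ) × (B → ℝ)) :=
    (Set.univ.pi fun _ : A => Set.Icc (0:ℝ) lamMax) ×ˢ
      (Set.univ.pi fun _ : B => Set.Icc (0:ℝ) gamMax) with hBoxdef
  set T : Set ((A → ℝ) × (B → ℝ)) := ⋂ (a : A) (b : B), {p | ε ≤ p.1 a + p.2 b} with hTdef
  set S : Set ((A → ℝ) × (B → ℝ)) := Box ∩ T with hSdef
  have hmemS : ∀ p : (A → ℝ) × (B → ℝ), p ∈ S ↔
      (∀ a, 0 ≤ p.1 a ∧ p.1 a ≤ lamMax) ∧ (∀ b, 0 ≤ p.2 b ∧ p.2 b ≤ gamMax) ∧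
        (∀ a b, ε ≤ p.1 a + p.2 b) := by
    intro p
    simp only [hSdef, hBoxdef, hTdef, Set.mem_inter_iff, Set.mem_prod, Set.mem_pi,
      Set.mem_univ, forall_true_left, Set.mem_Icc, Set.mem_iInter, Set.mem_setOf_eq, and_assoc]
  have hBoxCompact : IsCompact Box :=
    (isCompact_univ_pi fun _ => isCompact_Icc).prod (isCompact_univ_pi fun _ => isCompact_Icc)
  have hTclosed : IsClosed T :=
    isClosed_iInter fun a => isClosed_iInter fun b =>
      isClosed_le continuous_const
        (((continuous_apply a).comp continuous_fst).add
          ((continuous_apply b).comp continuous_snd))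
  have hScompact : IsCompact S := hBoxCompact.inter_right hTclosed
  have h11S : ((fun _ => (1:ℝ)), (fun _ => (1:ℝ))) ∈ S := by
    rw [hmemS]
    refine ⟨fun a => ⟨zero_le_one, le_max_left _ _⟩, fun b => ⟨zero_le_one, le_max_left _ _⟩,
      fun a b => by norm_num; linarith⟩
  have hcont : ContinuousOn f S := by
    simp only [hfdef, Jf]
    apply ContinuousOn.add
    apply ContinuousOn.add
    · refine ContinuousOn.mul continuousOn_const ?_
      refine continuousOn_finset_sum _ fun a _ => continuousOn_finset_sum _ fun b _ => ?_
      refine ContinuousOn.log ?_ ?_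
      · exact (((continuous_apply a).comp continuous_fst).add
          ((continuous_apply b).comp continuous_snd)).continuousOn
      · intro p hp
        exact ne_of_gt (lt_of_lt_of_le hεpos (((hmemS p).mp hp).2.2 a b))
    · exact (continuous_const.mul (continuous_finset_sum _ fun a _ =>
        ((continuous_apply a).comp continuous_fst).mul continuous_const)).continuousOn
    · exact (continuous_const.mul (continuous_finset_sum _ fun b _ =>
        ((continuous_apply b).comp continuous_snd).mul continuous_const)).continuousOn
  obtain ⟨p₀, hp₀S, hp₀min⟩ := hScompact.exists_isMinOn ⟨_, h11S⟩ hcont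
  obtain ⟨hp₀1, hp₀2, hp₀3⟩ := (hmemS p₀).mp hp₀S
  refine ⟨lamMax, gamMax, ε, p₀.1, p₀.2, hlamMaxpos, hgamMaxpos, hεpos, hp₀1, hp₀2, hp₀3, ?_⟩
  intro lam gam hl hg hpos
  by_cases hM : Jf c c' c'' lam gam ≤ M
  · have hmem : (lam, gam) ∈ S := by
      rw [hmemS]
      obtain ⟨hb1, hb2, hb3⟩ := hbound lam gam hl hg hpos hM
      exact ⟨fun a => ⟨hl a, hb1 a⟩, fun b => ⟨hg b, hb2 b⟩, hb3⟩
    have h0 := isMinOn_iff.mp hp₀min (lam, gam) hmem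
    simp only [hfdef] at h0
    exact h0
  · push_neg at hM
    have h0 := isMinOn_iff.mp hp₀min _ h11S
    simp only [hfdef] at h0
    rw [← hMdef] at h0
    exact h0.trans hM.le
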